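/- For every β > 0 there exists α > 0 (explicitly any α with (2/3)·2^{3/2}α³ + 12·2^{1/2}α < β/2) such that: if y_n > β, 0 < 1 − |θ̂'|² + x < 2α², x < α², and |θ̂'| < 2, then y_n − (2/3)(1+x−|θ̂'|²)^{3/2} − 3(1+x−|θ̂'|²)^{1/2}|θ̂'|² > β/2 > 0. -/

import Mathlib

namespace Real

lemma rpow_three_halves_eq_rpow_half_pow {x : ℝ} (hx : 0 ≤ x) :
    x ^ ((3:ℝ)/2) = (x ^ ((1:ℝ)/2)) ^ 3 := by
  rw [← rpow_natCast, ← rpow_mul hx]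
  norm_num

lemma rpow_half_lt_of_lt_mul_sq {z c α : ℝ} (hz : 0 ≤ z) (hα : 0 ≤ α) (h : z < c * α ^ 2) :
    z ^ ((1:ℝ)/2) < c ^ ((1:ℝ)/2) * α := by
  have hc : 0 ≤ c := by
    by_contra! hc
    nlinarith [mul_nonpos_of_nonpos_of_nonneg hc.le (sq_nonneg α)]
  calc z ^ ((1:ℝ)/2) < (c * α ^ 2) ^ ((1:ℝ)/2) := rpow_lt_rpow hz h (by norm_num)
    _ = c ^ ((1:ℝ)/2) * α := by
      rw [mul_rpow hc (sq_nonneg α), ← sqrt_eq_rpow (α ^ 2), sqrt_sq hα]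

end Real

open Real in
/-- For every `β > 0` and any `α > 0` with `(2/3)·2^{3/2}α³ + 12·2^{1/2}α < β/2`:
if `y_n > β`, `0 < 1 − |θ̂'|² + x < 2α²`, `x < α²`, and `|θ̂'| < 2`, then
`y_n − (2/3)(1+x−|θ̂'|²)^{3/2} − 3(1+x−|θ̂'|²)^{1/2}|θ̂'|² > β/2 > 0`. -/
theorem stmt12 (β : ℝ) (hβ : 0 < β) (α : ℝ) (hα : 0 < α)
    (hcond : 2/3 * 2 ^ ((3:ℝ)/2) * α^3 + 12 * 2 ^ ((1:ℝ)/2) * α < β/2) :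
    ∀ yn x a : ℝ, β < yn → 0 ≤ x → x < α^2 →
      0 < 1 - a^2 + x → 1 - a^2 + x < 2 * α^2 → 0 ≤ a → a < 2 →
      β/2 < yn - 2/3 * (1 + x - a^2) ^ ((3:ℝ)/2)
        - 3 * (1 + x - a^2) ^ ((1:ℝ)/2) * a^2 ∧ (0:ℝ) < β/2 := by
  intro yn x a hyn _ _ hZpos hZlt ha ha2
  rw [show 1 + x - a ^ 2 = 1 - a ^ 2 + x by ring,
    rpow_three_halves_eq_rpow_half_pow hZpos.le]
  rw [rpow_three_halves_eq_rpow_half_pow zero_le_two] at hcond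
  set s := (1 - a ^ 2 + x) ^ ((1:ℝ)/2)
  set t := (2:ℝ) ^ ((1:ℝ)/2)
  have hs : 0 ≤ s := rpow_nonneg hZpos.le _
  have hst : s < t * α := rpow_half_lt_of_lt_mul_sq hZpos.le hα.le hZlt
  have ha4 : a ^ 2 < 4 := by nlinarith
  have hcube : s ^ 3 < (t * α) ^ 3 := pow_lt_pow_left₀ hst hs three_ne_zero
  have hcross : s * a ^ 2 ≤ t * α * 4 :=
    mul_le_mul hst.le ha4.le (sq_nonneg a) (by positivity)
  refine ⟨?_, half_pos hβ⟩
  rw [mul_pow] at hcube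
  linarith
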